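/- Let & be a left continuous t-norm on [0,1], Q = ([0,1], &, 1), and δ_K the Q-approach structure on [0,1] given by δ_K(x,A) = (inf A) → x for nonempty A and 0 for A = ∅. Then a map λ: [0,1] → [0,1] is continuous as a map ([0,1], δ_K) → ([0,1], δ_K) of Q-approach spaces (i.e., δ_K(x,A) ≤ δ_K(λ(x), λ(A)) for all x and A) if and only if (i) y → x ≤ λ(y) → λ(x) for all x, y ∈ [0,1], and (ii) λ(inf A) = inf λ(A) for every nonempty A ⊆ [0,1] (λ is right continuous). -/
import Mathlib


open unitInterval
open scoped Classical

instance : Fact ((0:ℝ) ≤ 1) := ⟨zero_le_one⟩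

/-- The `[0,1]`-approach structure `δ_K` on `[0,1]`:
`δ_K(x,A) = (inf A) → x` for nonempty `A`, and `δ_K(x,∅) = 0`. -/
noncomputable def dK (imp : I → I → I) (x : I) (A : Set I) : I :=
  if A.Nonempty then imp (sInf A) x else 0

/-- For a left continuous t-norm `&` on `[0,1]`, a map
`λ : ([0,1],δ_K) → ([0,1],δ_K)` is continuous iff it preserves the
`[0,1]`-order `α_R` and preserves infima of nonempty sets
(is right continuous). -/
theorem stmt_11 (mul : I → I → I) (imp : I → I → I)
    (hcomm : ∀ a b, mul a b = mul b a)
    (hassoc : ∀ a b c, mul (mul a b) c = mul a (mul b c))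
    (hmono : ∀ a, Monotone (mul a))
    (hunit : ∀ a, mul 1 a = a)
    (hadj : ∀ p q r, mul p q ≤ r ↔ q ≤ imp p r)
    (lam : I → I) :
    (∀ (x : I) (A : Set I), dK imp x A ≤ dK imp (lam x) (lam '' A)) ↔
      ((∀ x y : I, imp y x ≤ imp (lam y) (lam x)) ∧
       (∀ A : Set I, A.Nonempty → lam (sInf A) = sInf (lam '' A))) := by
  have key : ∀ p r : I, p ≤ r ↔ (1:I) ≤ imp p r := by
    intro p r
    rw [← hadj p 1 r, hcomm, hunit]
  constructor
  · intro h
    have hi : ∀ x y : I, imp y x ≤ imp (lam y) (lam x) := by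
      intro x y
      have := h x {y}
      simpa [dK, Set.image_singleton] using this
    have mono : Monotone lam := by
      intro u v huv
      have h1 : (1:I) ≤ imp u v := (key u v).1 huv
      exact (key (lam u) (lam v)).2 (le_trans h1 (hi v u))
    refine ⟨hi, fun A hA => ?_⟩
    refine le_antisymm ?_ ?_
    · refine le_sInf ?_
      rintro b ⟨a, ha, rfl⟩
      exact mono (sInf_le ha)
    · have := h (sInf A) A
      rw [dK, dK, if_pos hA, if_pos (hA.image lam)] at this
      have h1 : (1:I) ≤ imp (sInf A) (sInf A) := (key _ _).1 le_rfl
      exact (key _ _).2 (le_trans h1 this)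
  · rintro ⟨hi, hinf⟩ x A
    rcases A.eq_empty_or_nonempty with rfl | hA
    · simp [dK]
    · rw [dK, dK, if_pos hA, if_pos (hA.image lam), ← hinf A hA]
      exact hi x (sInf A)
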